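/- If n ≥ 4, then q(S_{n,2}) > n + 2 - 4/(n+1). -/

import Mathlib

open SimpleGraph

/-- The signless Laplacian matrix `Q(G) = D(G) + A(G)` of a finite simple graph. -/
noncomputable def signlessLaplacian {V : Type*} [Fintype V] [DecidableEq V]
    (G : SimpleGraph V) : Matrix V V ℝ :=
  letI := Classical.decRel G.Adj
  Matrix.diagonal (fun v => (G.degree v : ℝ)) + G.adjMatrix ℝ

/-- The `Q`-index of a graph: the largest eigenvalue of its signless Laplacian. -/
noncomputable def qIndex {V : Type*} [Fintype V] [DecidableEq V]
    (G : SimpleGraph V) : ℝ :=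
  sSup (spectrum ℝ (signlessLaplacian G))

/-- `H` is contained in `G` as a (not necessarily induced) subgraph. -/
def ContainsCopy {α β : Type*} (H : SimpleGraph α) (G : SimpleGraph β) : Prop :=
  ∃ f : α ↪ β, ∀ ⦃a b⦄, H.Adj a b → G.Adj (f a) (f b)

/-- The friendship-type graph `F_n`: vertex `0` is dominating; the remaining
vertices are paired `(1,2), (3,4), …`; for even `n` the last vertex is a pendant. -/
def friendshipGraph (n : ℕ) : SimpleGraph (Fin n) where
  Adj i j := i ≠ j ∧ (i.val = 0 ∨ j.val = 0 ∨ (i.val + 1) / 2 = (j.val + 1) / 2)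
  symm := by
    constructor
    intro i j ⟨h1, h2⟩
    exact ⟨h1.symm, by tauto⟩
  loopless := by
    constructor
    intro i ⟨h1, _⟩
    exact h1 rfl

/-- The graph `S_{n,k} = K_k ∨ \overline{K}_{n-k}`: the first `k` vertices form a
complete graph joined to an independent set on the remaining `n - k` vertices. -/
def sGraph (n k : ℕ) : SimpleGraph (Fin n) where
  Adj i j := i ≠ j ∧ (i.val < k ∨ j.val < k)
  symm := by
    constructor
    intro i j ⟨h1, h2⟩
    exact ⟨h1.symm, h2.symm⟩
  loopless := by
    constructor
    intro i ⟨h1, _⟩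
    exact h1 rfl

/-- The number of edges of `G` with one endpoint in `X` and the other in `Y`
(counted as ordered pairs in `X × Y`; for disjoint `X`, `Y` this is `e(X,Y)`). -/
noncomputable def edgesBetween {V : Type*} [Fintype V] [DecidableEq V]
    (G : SimpleGraph V) (X Y : Finset V) : ℕ :=
  letI := Classical.decRel G.Adj
  ((X ×ˢ Y).filter fun p => G.Adj p.1 p.2).card

/-- The number of edges of `G` with both endpoints in `X`. -/
noncomputable def edgesWithin {V : Type*} [Fintype V] [DecidableEq V]
    (G : SimpleGraph V) (X : Finset V) : ℕ :=
  edgesBetween G X X / 2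

/-!
On `S_{n,k}` the vector equal to `n - k` on the clique and to `μ - (n + k - 2)` on the
independent set is an eigenvector of `Q` exactly when `μ² - (n + 2k - 2) μ + 2k(k - 1) = 0`, the
characteristic polynomial of the quotient matrix of the partition into clique and independent
set. For `k = 2` the larger root is `((n + 2) + √((n + 2)² - 16)) / 2`, which exceeds
`n + 2 - 4/(n + 1)` as soon as `n > 3`.
-/

open Matrix

theorem Matrix.mem_spectrum_of_mulVec_eq_smul {ι R : Type*} [Fintype ι] [DecidableEq ι]
    [CommRing R] {A : Matrix ι ι R} {μ : R} {v : ι → R} (hv : v ≠ 0)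
    (h : A *ᵥ v = μ • v) :
    μ ∈ spectrum R A := by
  rw [← Matrix.spectrum_toLin']
  exact Module.End.HasEigenvalue.mem_spectrum <|
    Module.End.hasEigenvalue_of_hasEigenvector ⟨Module.End.mem_eigenspace_iff.mpr h, hv⟩

theorem le_qIndex_of_mem_spectrum {V : Type*} [Fintype V] [DecidableEq V] {G : SimpleGraph V}
    {μ : ℝ} (h : μ ∈ spectrum ℝ (signlessLaplacian G)) : μ ≤ qIndex G :=
  le_csSup (Matrix.finite_spectrum _).bddAbove h

theorem signlessLaplacian_mulVec_apply {V : Type*} [Fintype V] [DecidableEq V]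
    (G : SimpleGraph V) [DecidableRel G.Adj] (v : V → ℝ) (i : V) :
    (signlessLaplacian G *ᵥ v) i = G.degree i * v i + ∑ j ∈ G.neighborFinset i, v j := by
  rw [signlessLaplacian, add_mulVec, Pi.add_apply, mulVec_diagonal, adjMatrix_mulVec_apply]
  -- `signlessLaplacian` uses `Classical.decRel`, not the given instance
  congr!

theorem Fin.sum_ite_val_lt {M : Type*} [AddCommMonoid M] {n k : ℕ} (hk : k ≤ n) (x y : M) :
    ∑ i : Fin n, (if (i : ℕ) < k then x else y) = k • x + (n - k) • y := by
  rw [Finset.sum_ite, Finset.sum_const, Finset.sum_const, Finset.filter_not, Finset.card_sdiff,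
    Finset.inter_univ, Fin.card_filter_val_lt]
  simp [hk]

namespace sGraph

variable {n k : ℕ}

theorem neighborFinset_of_lt {i : Fin n} [Fintype ((sGraph n k).neighborSet i)]
    (hi : (i : ℕ) < k) :
    (sGraph n k).neighborFinset i = Finset.univ.erase i := by
  ext j
  simp only [mem_neighborFinset, Finset.mem_erase, Finset.mem_univ, and_true]
  exact ⟨fun h => h.1.symm, fun h => ⟨h.symm, Or.inl hi⟩⟩

theorem neighborFinset_of_le {i : Fin n} [Fintype ((sGraph n k).neighborSet i)]
    (hi : k ≤ (i : ℕ)) :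
    (sGraph n k).neighborFinset i = ({j | (j : ℕ) < k} : Finset (Fin n)) := by
  ext j
  simp only [mem_neighborFinset, Finset.mem_filter, Finset.mem_univ, true_and]
  refine ⟨fun h => h.2.resolve_left (by omega), fun h => ⟨?_, Or.inr h⟩⟩
  rintro rfl
  omega

theorem mem_spectrum_signlessLaplacian (hk : 0 < k) (hkn : k < n) {μ : ℝ}
    (hμ : μ ^ 2 - (n + 2 * k - 2) * μ + 2 * k * (k - 1) = 0) :
    μ ∈ spectrum ℝ (signlessLaplacian (sGraph n k)) := by
  classical
  set x : ℝ := n - k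
  set y : ℝ := μ - (n + k - 2)
  set v : Fin n → ℝ := fun i => if (i : ℕ) < k then x else y
  have hx : x ≠ 0 := sub_ne_zero.mpr (by exact_mod_cast hkn.ne')
  have hv : v ≠ 0 := fun h => hx (by simpa [v, hk] using congrFun h ⟨0, by omega⟩)
  have hsum : ∑ j, v j = k * x + (n - k) * y := by
    simp only [v, Fin.sum_ite_val_lt hkn.le, nsmul_eq_mul, Nat.cast_sub hkn.le]
  refine Matrix.mem_spectrum_of_mulVec_eq_smul hv (funext fun i => ?_)
  rw [signlessLaplacian_mulVec_apply, Pi.smul_apply, smul_eq_mul, degree]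
  by_cases hi : (i : ℕ) < k
  · rw [neighborFinset_of_lt hi, Finset.sum_erase_eq_sub (Finset.mem_univ i), hsum,
      Finset.card_erase_of_mem (Finset.mem_univ i), Finset.card_univ, Fintype.card_fin,
      Nat.cast_sub (by omega)]
    simp only [v, if_pos hi, x, y]
    ring
  · have hv_clique : ∀ j ∈ ({j | (j : ℕ) < k} : Finset (Fin n)), v j = x :=
      fun j hj => if_pos (Finset.mem_filter.mp hj).2
    rw [neighborFinset_of_le (not_lt.mp hi), Finset.sum_congr rfl hv_clique,
      Finset.sum_const, Fin.card_filter_val_lt, min_eq_right hkn.le, nsmul_eq_mul]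
    simp only [v, if_neg hi, x, y]
    linear_combination -hμ

end sGraph

theorem add_two_sub_four_div_lt_larger_root {a : ℝ} (ha : 3 < a) :
    a + 2 - 4 / (a + 1) < (a + 2 + √((a + 2) ^ 2 - 16)) / 2 := by
  have ha1 : 0 < a + 1 := by linarith
  suffices a + 2 - 8 / (a + 1) < √((a + 2) ^ 2 - 16) by
    have : 8 / (a + 1) = 2 * (4 / (a + 1)) := by ring
    linarith
  rw [Real.lt_sqrt (by rw [sub_nonneg, div_le_iff₀ ha1]; nlinarith), sub_div' ha1.ne', div_pow,
    div_lt_iff₀ (by positivity)]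
  nlinarith

/-- For `n ≥ 4`, `q(S_{n,2}) > n + 2 - 4/(n+1)`. -/
theorem stmt_7 (n : ℕ) (hn : 4 ≤ n) :
    (n : ℝ) + 2 - 4 / ((n : ℝ) + 1) < qIndex (sGraph n 2) := by
  have hn' : (3 : ℝ) < n := by exact_mod_cast hn
  have hdisc : ((n : ℝ) + 2) ^ 2 - 16 = √(((n : ℝ) + 2) ^ 2 - 16) ^ 2 :=
    (Real.sq_sqrt (by nlinarith)).symm
  refine (add_two_sub_four_div_lt_larger_root hn').trans_le <| le_qIndex_of_mem_spectrum <|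
    sGraph.mem_spectrum_signlessLaplacian two_pos (by omega) ?_
  push_cast
  linear_combination -hdisc / 4
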